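/- Let a : ℤ² → ℂ be the three-direction linear box spline filter: a(0,0) = 1/4, a(v) = 1/8 for v ∈ E := {(1,0), (0,1), (1,1), (−1,0), (0,−1), (−1,−1)}, and a(v) = 0 otherwise. Define 21 high-pass filters: for each v ∈ E, the filter (√2/8)(δ_v − δ_{(0,0)}) (6 filters), and for each unordered pair {v,w} of distinct elements of E, the filter (1/8)(δ_v − δ_w) (15 filters). Then {a; b_1, …, b_{21}} is a 2-dimensional tight framelet filter bank. -/
import Mathlib


open scoped BigOperators

/-- The Dirac filter `δ_γ` on `ℤ²`. -/
noncomputable def dirac2 (γ : Fin 2 → ℤ) : (Fin 2 → ℤ) → ℂ :=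
  fun k => if k = γ then 1 else 0

/-- `{a; b_ℓ, ℓ ∈ ι}` is a 2-dimensional dyadic tight framelet filter bank. -/
def IsTFFB2 {ι : Type} [Fintype ι] (a : (Fin 2 → ℤ) → ℂ)
    (b : ι → (Fin 2 → ℤ) → ℂ) : Prop :=
  ∀ γ : Fin 2 → ℤ, (∀ i, γ i = 0 ∨ γ i = 1) → ∀ n : Fin 2 → ℤ,
    (∑ᶠ k : Fin 2 → ℤ, a (fun i => γ i + 2 * k i) *
        (starRingEnd ℂ) (a (fun i => n i + γ i + 2 * k i))) +
      ∑ ℓ : ι, ∑ᶠ k : Fin 2 → ℤ, b ℓ (fun i => γ i + 2 * k i) *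
        (starRingEnd ℂ) (b ℓ (fun i => n i + γ i + 2 * k i)) =
      (1 / 4 : ℂ) * (if n = 0 then 1 else 0)

/-- The six nonzero support points of the three-direction linear box spline filter. -/
def eE : Fin 6 → (Fin 2 → ℤ) := ![![1, 0], ![0, 1], ![1, 1], ![-1, 0], ![0, -1], ![-1, -1]]

/-- The three-direction linear box spline filter: `1/4` at the origin, `1/8` at the six
points of `eE`, and `0` elsewhere. -/
noncomputable def threeDirFilter : (Fin 2 → ℤ) → ℂ :=
  fun v => if v = 0 then 1 / 4 else if ∃ i, v = eE i then 1 / 8 else 0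

/-- The 21 high-pass filters: `(√2/8)(δ_v - δ_0)` for each of the 6 points `v` of `eE`,
and `(1/8)(δ_v - δ_w)` for each of the 15 unordered pairs of distinct points of `eE`. -/
noncomputable def threeDirHighPass :
    (Fin 6 ⊕ {p : Fin 6 × Fin 6 // p.1 < p.2}) → (Fin 2 → ℤ) → ℂ
  | Sum.inl i => fun k => ((Real.sqrt 2 / 8 : ℝ) : ℂ) * (dirac2 (eE i) k - dirac2 0 k)
  | Sum.inr p => fun k => (1 / 8 : ℂ) * (dirac2 (eE p.1.1) k - dirac2 (eE p.1.2) k)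

/-! ### Auxiliary lemmas -/

lemma dirac2_self (p : Fin 2 → ℤ) : dirac2 p p = 1 := by simp [dirac2]
lemma dirac2_ne {p x : Fin 2 → ℤ} (h : x ≠ p) : dirac2 p x = 0 := by simp [dirac2, h]

lemma conj_dirac (p x : Fin 2 → ℤ) : (starRingEnd ℂ) (dirac2 p x) = dirac2 p x := by
  unfold dirac2; split <;> simp

lemma a_conj (x : Fin 2 → ℤ) : (starRingEnd ℂ) (threeDirFilter x) = threeDirFilter x := by
  unfold threeDirFilter
  split
  · simp [map_div₀, map_ofNat]
  · split <;> simp [map_div₀, map_ofNat]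

lemma b_conj (ℓ) (x : Fin 2 → ℤ) :
    (starRingEnd ℂ) (threeDirHighPass ℓ x) = threeDirHighPass ℓ x := by
  cases ℓ <;> simp [threeDirHighPass, map_mul, map_sub, conj_dirac, map_div₀, map_ofNat,
    Complex.conj_ofReal]

lemma eE_ne_zero (i : Fin 6) : eE i ≠ 0 := by fin_cases i <;> decide

lemma eE_inj : Function.Injective eE := by decide

lemma a_eq (x : Fin 2 → ℤ) :
    threeDirFilter x = dirac2 0 x * (1/4) + (∑ i, dirac2 (eE i) x) * (1/8) := by
  by_cases h0 : x = 0
  · subst h0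
    have h : ∀ i, dirac2 (eE i) 0 = 0 := fun i => dirac2_ne (fun h => (eE_ne_zero i) h.symm)
    simp [threeDirFilter, dirac2_self, h]
  · by_cases hE : ∃ i, x = eE i
    · obtain ⟨i, rfl⟩ := hE
      have h1 : dirac2 0 (eE i) = 0 := dirac2_ne (eE_ne_zero i)
      have h2 : ∀ j, dirac2 (eE j) (eE i) = if i = j then 1 else 0 := by
        intro j
        by_cases hij : i = j
        · subst hij; simp [dirac2_self]
        · rw [dirac2_ne (fun h => hij (eE_inj h)), if_neg hij]
      rw [threeDirFilter, if_neg h0, if_pos ⟨i, rfl⟩, h1]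
      simp [h2]
    · push_neg at hE
      have h1 : dirac2 0 x = 0 := dirac2_ne h0
      have h2 : ∀ i, dirac2 (eE i) x = 0 := fun i => dirac2_ne (hE i)
      simp [threeDirFilter, h0, hE, h1, h2]

lemma a_E (j : Fin 6) : threeDirFilter (eE j) = 1/8 := by
  rw [threeDirFilter]
  rw [if_neg (eE_ne_zero j), if_pos ⟨j, rfl⟩]

lemma sq2 : ((Real.sqrt 2 / 8 : ℝ) : ℂ) * ((Real.sqrt 2 / 8 : ℝ) : ℂ) = 1 / 32 := by
  have h : Real.sqrt 2 * Real.sqrt 2 = 2 := Real.mul_self_sqrt (by norm_num)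
  push_cast
  rw [div_mul_div_comm, ← Complex.ofReal_mul, h]
  norm_num

lemma pair_sum (g : Fin 6 → Fin 6 → ℂ) :
    ∑ p : {p : Fin 6 × Fin 6 // p.1 < p.2}, g p.1.1 p.1.2 =
      g 0 1 + g 0 2 + g 0 3 + g 0 4 + g 0 5 + g 1 2 + g 1 3 + g 1 4 + g 1 5 +
      g 2 3 + g 2 4 + g 2 5 + g 3 4 + g 3 5 + g 4 5 := by
  rw [← Finset.sum_subtype (Finset.univ.filter fun p : Fin 6 × Fin 6 => p.1 < p.2)
      (by simp) (fun p => g p.1 p.2)]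
  rw [Finset.sum_filter, Fintype.sum_prod_type]
  simp only [Fin.sum_univ_six]
  simp only [show ((0:Fin 6)<1)=True by decide, show ((0:Fin 6)<2)=True by decide,
    show ((0:Fin 6)<3)=True by decide, show ((0:Fin 6)<4)=True by decide,
    show ((0:Fin 6)<5)=True by decide, show ((1:Fin 6)<2)=True by decide,
    show ((1:Fin 6)<3)=True by decide, show ((1:Fin 6)<4)=True by decide,
    show ((1:Fin 6)<5)=True by decide, show ((2:Fin 6)<3)=True by decide,
    show ((2:Fin 6)<4)=True by decide, show ((2:Fin 6)<5)=True by decide,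
    show ((3:Fin 6)<4)=True by decide, show ((3:Fin 6)<5)=True by decide,
    show ((4:Fin 6)<5)=True by decide, show ((1:Fin 6)<0)=False by decide,
    show ((2:Fin 6)<0)=False by decide, show ((2:Fin 6)<1)=False by decide,
    show ((3:Fin 6)<0)=False by decide, show ((3:Fin 6)<1)=False by decide,
    show ((3:Fin 6)<2)=False by decide, show ((4:Fin 6)<0)=False by decide,
    show ((4:Fin 6)<1)=False by decide, show ((4:Fin 6)<2)=False by decide,
    show ((4:Fin 6)<3)=False by decide, show ((5:Fin 6)<0)=False by decide,
    show ((5:Fin 6)<1)=False by decide, show ((5:Fin 6)<2)=False by decide,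
    show ((5:Fin 6)<3)=False by decide, show ((5:Fin 6)<4)=False by decide,
    show ¬((0:Fin 6)<0) by decide, show ¬((1:Fin 6)<1) by decide,
    show ¬((2:Fin 6)<2) by decide, show ¬((3:Fin 6)<3) by decide,
    show ¬((4:Fin 6)<4) by decide, show ¬((5:Fin 6)<5) by decide,
    if_true, if_false, ite_true, ite_false, add_zero, zero_add]
  ring

/-- The key pointwise identity. -/
lemma key' (x y : Fin 2 → ℤ) :
    threeDirFilter x * (starRingEnd ℂ) (threeDirFilter y) +
      ∑ ℓ : Fin 6 ⊕ {p : Fin 6 × Fin 6 // p.1 < p.2},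
        threeDirHighPass ℓ x * (starRingEnd ℂ) (threeDirHighPass ℓ y) =
    if y = x then threeDirFilter x else 0 := by
  have hR : (if y = x then threeDirFilter x else 0) =
      dirac2 0 x * dirac2 0 y * (1/4) + (∑ i, dirac2 (eE i) x * dirac2 (eE i) y) * (1/8) := by
    by_cases h : y = x
    · subst h
      have hd : ∀ p : Fin 2 → ℤ, dirac2 p y * dirac2 p y = dirac2 p y := by
        intro p; unfold dirac2; split <;> simp
      rw [if_pos rfl, a_eq, hd]
      simp only [hd]
    · have hd : ∀ p : Fin 2 → ℤ, dirac2 p x * dirac2 p y = 0 := by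
        intro p
        unfold dirac2
        split
        · rw [if_neg (by rintro rfl; exact h (by assumption ▸ rfl))]; ring
        · ring
      rw [if_neg h, hd]
      simp only [hd]
      simp
  rw [hR, a_conj]
  rw [Fintype.sum_sum_type]
  have hb1 : ∀ i : Fin 6, threeDirHighPass (Sum.inl i) x *
      (starRingEnd ℂ) (threeDirHighPass (Sum.inl i) y) =
      (1/32) * ((dirac2 (eE i) x - dirac2 0 x) * (dirac2 (eE i) y - dirac2 0 y)) := by
    intro i
    rw [b_conj]
    show (((Real.sqrt 2 / 8 : ℝ) : ℂ) * _) * (((Real.sqrt 2 / 8 : ℝ) : ℂ) * _) = _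
    rw [show ∀ c A B : ℂ, (c*A)*(c*B) = (c*c)*(A*B) from fun c A B => by ring, sq2]
  have hb2 : ∀ p : {p : Fin 6 × Fin 6 // p.1 < p.2}, threeDirHighPass (Sum.inr p) x *
      (starRingEnd ℂ) (threeDirHighPass (Sum.inr p) y) =
      (1/64) * ((dirac2 (eE p.1.1) x - dirac2 (eE p.1.2) x) *
        (dirac2 (eE p.1.1) y - dirac2 (eE p.1.2) y)) := by
    intro p
    rw [b_conj]
    show ((1/8 : ℂ) * _) * ((1/8 : ℂ) * _) = _
    ring
  simp only [hb1, hb2]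
  rw [pair_sum (fun i j => (1/64) * ((dirac2 (eE i) x - dirac2 (eE j) x) *
        (dirac2 (eE i) y - dirac2 (eE j) y)))]
  rw [a_eq x, a_eq y]
  simp only [Fin.sum_univ_six]
  ring

lemma vanish {x : Fin 2 → ℤ} (h0 : x ≠ 0) (hE : ∀ j, x ≠ eE j) :
    threeDirFilter x = 0 ∧ ∀ ℓ, threeDirHighPass ℓ x = 0 := by
  constructor
  · simp only [threeDirFilter, if_neg h0]
    rw [if_neg]; push_neg; exact hE
  · intro ℓ
    cases ℓ <;> simp [threeDirHighPass, dirac2_ne h0, dirac2_ne (hE _)]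

lemma step (γ n : Fin 2 → ℤ) (K : Finset (Fin 2 → ℤ))
    (hK : ∀ k : Fin 2 → ℤ, k ∉ K →
      ((fun i => γ i + 2 * k i) ≠ 0 ∧ ∀ j, (fun i => γ i + 2 * k i) ≠ eE j)) :
    (∑ᶠ k : Fin 2 → ℤ, threeDirFilter (fun i => γ i + 2 * k i) *
        (starRingEnd ℂ) (threeDirFilter (fun i => n i + γ i + 2 * k i))) +
      ∑ ℓ : Fin 6 ⊕ {p : Fin 6 × Fin 6 // p.1 < p.2}, ∑ᶠ k : Fin 2 → ℤ,
        threeDirHighPass ℓ (fun i => γ i + 2 * k i) *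
        (starRingEnd ℂ) (threeDirHighPass ℓ (fun i => n i + γ i + 2 * k i)) =
      (if n = 0 then ∑ k ∈ K, threeDirFilter (fun i => γ i + 2 * k i) else 0) := by
  have ha : (∑ᶠ k : Fin 2 → ℤ, threeDirFilter (fun i => γ i + 2 * k i) *
      (starRingEnd ℂ) (threeDirFilter (fun i => n i + γ i + 2 * k i))) =
      ∑ k ∈ K, threeDirFilter (fun i => γ i + 2 * k i) *
      (starRingEnd ℂ) (threeDirFilter (fun i => n i + γ i + 2 * k i)) := by
    apply finsum_eq_sum_of_support_subset
    intro k hk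
    by_contra hkK
    refine hk ?_
    show (threeDirFilter fun i => γ i + 2 * k i) *
      (starRingEnd ℂ) (threeDirFilter fun i => n i + γ i + 2 * k i) = 0
    rw [(vanish (hK k hkK).1 (hK k hkK).2).1, zero_mul]
  have hb : ∀ ℓ, (∑ᶠ k : Fin 2 → ℤ, threeDirHighPass ℓ (fun i => γ i + 2 * k i) *
      (starRingEnd ℂ) (threeDirHighPass ℓ (fun i => n i + γ i + 2 * k i))) =
      ∑ k ∈ K, threeDirHighPass ℓ (fun i => γ i + 2 * k i) *
      (starRingEnd ℂ) (threeDirHighPass ℓ (fun i => n i + γ i + 2 * k i)) := by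
    intro ℓ
    apply finsum_eq_sum_of_support_subset
    intro k hk
    by_contra hkK
    refine hk ?_
    show (threeDirHighPass ℓ fun i => γ i + 2 * k i) *
      (starRingEnd ℂ) (threeDirHighPass ℓ fun i => n i + γ i + 2 * k i) = 0
    rw [(vanish (hK k hkK).1 (hK k hkK).2).2 ℓ, zero_mul]
  rw [ha]
  simp only [hb]
  rw [Finset.sum_comm, ← Finset.sum_add_distrib]
  have hcond : ∀ k : Fin 2 → ℤ,
      ((fun i => n i + γ i + 2 * k i) = fun i => γ i + 2 * k i) = (n = 0) := by
    intro k
    apply propext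
    constructor
    · intro h; funext i; have := congrFun h i; simpa using by omega
    · intro h; subst h; funext i; simp
  calc ∑ k ∈ K, _ = ∑ k ∈ K, (if n = 0 then threeDirFilter (fun i => γ i + 2 * k i) else 0) := by
        refine Finset.sum_congr rfl fun k _ => ?_
        rw [key']
        simp only [hcond]
      _ = _ := by
        by_cases hn : n = 0 <;> simp [hn]

lemma funeq2 {k : Fin 2 → ℤ} {a b : ℤ} (h0 : k 0 = a) (h1 : k 1 = b) : k = ![a, b] := by
  funext i; fin_cases i <;> simpa

lemma eE_vals : ∀ j : Fin 6,
    (eE j 0 = 1 ∧ eE j 1 = 0) ∨ (eE j 0 = 0 ∧ eE j 1 = 1) ∨ (eE j 0 = 1 ∧ eE j 1 = 1) ∨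
    (eE j 0 = -1 ∧ eE j 1 = 0) ∨ (eE j 0 = 0 ∧ eE j 1 = -1) ∨ (eE j 0 = -1 ∧ eE j 1 = -1) := by
  decide

/-- The three-direction linear box spline filter together with the 21 two-coefficient
high-pass filters forms a 2-dimensional tight framelet filter bank. -/
theorem threeDir_tffb :
    Fintype.card (Fin 6 ⊕ {p : Fin 6 × Fin 6 // p.1 < p.2}) = 21 ∧
      IsTFFB2 threeDirFilter threeDirHighPass := by
  refine ⟨by decide, ?_⟩
  intro γ hγ n
  have h0 := hγ 0
  have h1 := hγ 1
  rcases h0 with h0 | h0 <;> rcases h1 with h1 | h1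
  · -- γ = (0,0)
    rw [step γ n {![0, 0]} ?hK]
    case hK =>
      intro k hk
      rw [Finset.mem_singleton] at hk
      have e1 : ¬(k 0 = 0 ∧ k 1 = 0) := fun ⟨a, b⟩ => hk (funeq2 a b)
      constructor
      · intro h
        have hc0 : γ 0 + 2 * k 0 = 0 := congrFun h 0
        have hc1 : γ 1 + 2 * k 1 = 0 := congrFun h 1
        omega
      · intro j h
        have hc0 : γ 0 + 2 * k 0 = eE j 0 := congrFun h 0
        have hc1 : γ 1 + 2 * k 1 = eE j 1 := congrFun h 1
        rcases eE_vals j with h' | h' | h' | h' | h' | h' <;> omega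
    · rw [Finset.sum_singleton,
        show (fun i => γ i + 2 * (![0, 0] : Fin 2 → ℤ) i) = 0 from
          funext fun i => by fin_cases i <;> simp [h0, h1],
        show threeDirFilter 0 = 1/4 from by simp [threeDirFilter]]
      by_cases hn : n = 0 <;> simp [hn]
  · -- γ = (0,1)
    rw [step γ n {![0, 0], ![0, -1]} ?hK]
    case hK =>
      intro k hk
      simp only [Finset.mem_insert, Finset.mem_singleton, not_or] at hk
      have e1 : ¬(k 0 = 0 ∧ k 1 = 0) := fun ⟨a, b⟩ => hk.1 (funeq2 a b)
      have e2 : ¬(k 0 = 0 ∧ k 1 = -1) := fun ⟨a, b⟩ => hk.2 (funeq2 a b)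
      constructor
      · intro h
        have hc1 : γ 1 + 2 * k 1 = 0 := congrFun h 1
        omega
      · intro j h
        have hc0 : γ 0 + 2 * k 0 = eE j 0 := congrFun h 0
        have hc1 : γ 1 + 2 * k 1 = eE j 1 := congrFun h 1
        rcases eE_vals j with h' | h' | h' | h' | h' | h' <;> omega
    · rw [Finset.sum_insert (by decide), Finset.sum_singleton,
        show (fun i => γ i + 2 * (![0, 0] : Fin 2 → ℤ) i) = eE 1 from by
          rw [show eE 1 = ![0, 1] from by decide]
          exact funext fun i => by fin_cases i <;> simp [h0, h1],
        show (fun i => γ i + 2 * (![0, -1] : Fin 2 → ℤ) i) = eE 4 from by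
          rw [show eE 4 = ![0, -1] from by decide]
          exact funext fun i => by fin_cases i <;> simp [h0, h1],
        a_E, a_E]
      by_cases hn : n = 0 <;> simp [hn] <;> norm_num
  · -- γ = (1,0)
    rw [step γ n {![0, 0], ![-1, 0]} ?hK]
    case hK =>
      intro k hk
      simp only [Finset.mem_insert, Finset.mem_singleton, not_or] at hk
      have e1 : ¬(k 0 = 0 ∧ k 1 = 0) := fun ⟨a, b⟩ => hk.1 (funeq2 a b)
      have e2 : ¬(k 0 = -1 ∧ k 1 = 0) := fun ⟨a, b⟩ => hk.2 (funeq2 a b)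
      constructor
      · intro h
        have hc0 : γ 0 + 2 * k 0 = 0 := congrFun h 0
        omega
      · intro j h
        have hc0 : γ 0 + 2 * k 0 = eE j 0 := congrFun h 0
        have hc1 : γ 1 + 2 * k 1 = eE j 1 := congrFun h 1
        rcases eE_vals j with h' | h' | h' | h' | h' | h' <;> omega
    · rw [Finset.sum_insert (by decide), Finset.sum_singleton,
        show (fun i => γ i + 2 * (![0, 0] : Fin 2 → ℤ) i) = eE 0 from by
          rw [show eE 0 = ![1, 0] from by decide]
          exact funext fun i => by fin_cases i <;> simp [h0, h1],
        show (fun i => γ i + 2 * (![-1, 0] : Fin 2 → ℤ) i) = eE 3 from by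
          rw [show eE 3 = ![-1, 0] from by decide]
          exact funext fun i => by fin_cases i <;> simp [h0, h1],
        a_E, a_E]
      by_cases hn : n = 0 <;> simp [hn] <;> norm_num
  · -- γ = (1,1)
    rw [step γ n {![0, 0], ![-1, -1]} ?hK]
    case hK =>
      intro k hk
      simp only [Finset.mem_insert, Finset.mem_singleton, not_or] at hk
      have e1 : ¬(k 0 = 0 ∧ k 1 = 0) := fun ⟨a, b⟩ => hk.1 (funeq2 a b)
      have e2 : ¬(k 0 = -1 ∧ k 1 = -1) := fun ⟨a, b⟩ => hk.2 (funeq2 a b)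
      constructor
      · intro h
        have hc0 : γ 0 + 2 * k 0 = 0 := congrFun h 0
        omega
      · intro j h
        have hc0 : γ 0 + 2 * k 0 = eE j 0 := congrFun h 0
        have hc1 : γ 1 + 2 * k 1 = eE j 1 := congrFun h 1
        rcases eE_vals j with h' | h' | h' | h' | h' | h' <;> omega
    · rw [Finset.sum_insert (by decide), Finset.sum_singleton,
        show (fun i => γ i + 2 * (![0, 0] : Fin 2 → ℤ) i) = eE 2 from by
          rw [show eE 2 = ![1, 1] from by decide]
          exact funext fun i => by fin_cases i <;> simp [h0, h1],
        show (fun i => γ i + 2 * (![-1, -1] : Fin 2 → ℤ) i) = eE 5 from by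
          rw [show eE 5 = ![-1, -1] from by decide]
          exact funext fun i => by fin_cases i <;> simp [h0, h1],
        a_E, a_E]
      by_cases hn : n = 0 <;> simp [hn] <;> norm_num
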